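/- arXiv:1608.06798 — 3 statements merged into one kernel-verified Lean document; each statement's English description precedes it below -/
import Mathlib

section
/- Let H be a Hilbert space, (X,B,μ) a measure space, and |·| : H → L²₊(X,μ) an absolute pairing. Let a be a lower bounded closed quadratic form on H and b a lower bounded closed quadratic form on L²(X,μ) satisfying the first Beurling–Deny criterion. Let D_a ⊆ D(a) be a subspace that is an ideal of D(a) (with respect to |·|) and D_b ⊆ D(b) a subspace that is an ideal of D(b) (with respect to the pointwise modulus). Assume (i) a is dominated by b, and (ii) every nonnegative element of D_b that lies in |D(a)| lies in |D_a| (i.e. D_b⁺ ∩ |D(a)| ⊆ |D_a|). Then: if D_b is dense in D(b) with respect to the form norm of b, then D_a is dense in D(a) with respect to the form norm of a. -/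
open MeasureTheory
open scoped ComplexInnerProductSpace

noncomputable section

/-- A (densely defined) quadratic form on a complex Hilbert space `H`: a dense domain
`dom` and a map `Q` which, on the domain, is absolutely homogeneous of degree two and
satisfies the parallelogram identity. (The values of `Q` outside of `dom` are irrelevant.) -/
structure QForm (H : Type*) [NormedAddCommGroup H] [InnerProductSpace ℂ H] where
  dom : Submodule ℂ H
  dense_dom : Dense (dom : Set H)
  Q : H → ℝ
  smul_eq : ∀ (a : ℂ), ∀ f ∈ dom, Q (a • f) = ‖a‖ ^ 2 * Q f
  parallelogram : ∀ f ∈ dom, ∀ g ∈ dom, Q (f + g) + Q (f - g) = 2 * Q f + 2 * Q g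

/-- The squared form norm `‖f‖_q² = q(f) + μ'·‖f‖²` of a quadratic form, for a shift `μ'`. -/
def QForm.normSq {H : Type*} [NormedAddCommGroup H] [InnerProductSpace ℂ H]
    (q : QForm H) (μ' : ℝ) (f : H) : ℝ :=
  q.Q f + μ' * ‖f‖ ^ 2

/-- A quadratic form on `L²(X,μ)` is real if the domain is conjugation invariant and
`q(conj f) = q(f)`. -/
def QForm.IsReal {X : Type*} [MeasurableSpace X] {μ : Measure X}
    (q : QForm (Lp ℂ 2 μ)) : Prop :=
  ∀ f ∈ q.dom, ∃ g ∈ q.dom,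
    (∀ᵐ x ∂μ, g x = (starRingEnd ℂ) (f x)) ∧ q.Q g = q.Q f

/-- The first Beurling–Deny criterion for a quadratic form on `L²(X,μ)`: the form is real,
and `f ∈ D(q)` implies `|f| ∈ D(q)` with `q(|f|) ≤ q(f)`. -/
def QForm.BeurlingDeny {X : Type*} [MeasurableSpace X] {μ : Measure X}
    (q : QForm (Lp ℂ 2 μ)) : Prop :=
  q.IsReal ∧ ∀ f ∈ q.dom, ∃ g ∈ q.dom,
    (∀ᵐ x ∂μ, g x = ((‖f x‖ : ℝ) : ℂ)) ∧ q.Q g ≤ q.Q f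

end


noncomputable section

/-- The sesquilinear form induced by a quadratic form via polarization:
`q(f,g) = ¼ ∑_{k=1}^{4} i^k q(f + i^k g)`. -/
def QForm.sesq {H : Type*} [NormedAddCommGroup H] [InnerProductSpace ℂ H]
    (q : QForm H) (f g : H) : ℂ :=
  (1 / 4 : ℂ) * ∑ k ∈ Finset.range 4,
    Complex.I ^ (k + 1) * (q.Q (f + Complex.I ^ (k + 1) • g) : ℂ)

/-- Closedness of a quadratic form with respect to the form norm given by the shift `μ'`. -/
def QForm.ClosedWith {H : Type*} [NormedAddCommGroup H] [InnerProductSpace ℂ H]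
    (q : QForm H) (μ' : ℝ) : Prop :=
  ∀ u : ℕ → H, (∀ n, u n ∈ q.dom) →
    (∀ ε > (0 : ℝ), ∃ N : ℕ, ∀ i ≥ N, ∀ j ≥ N, q.normSq μ' (u i - u j) < ε) →
    ∃ v ∈ q.dom, Filter.Tendsto (fun n => q.normSq μ' (u n - v)) Filter.atTop (nhds 0)

variable {X : Type*} [MeasurableSpace X] {μ : MeasureTheory.Measure X}
variable {H : Type*} [NormedAddCommGroup H] [InnerProductSpace ℂ H]

/-- An element of `L²(X,μ)` is (a.e.) a nonnegative real function,
i.e. belongs to `L²₊(X,μ)`. -/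
def AeNonneg (μ : MeasureTheory.Measure X) (f : Lp ℂ 2 μ) : Prop :=
  ∀ᵐ x ∂μ, (f x).im = 0 ∧ 0 ≤ (f x).re

/-- `ξ` and `η` are paired with respect to the absolute map `A`: `⟨ξ,η⟩ = ⟨|ξ|,|η|⟩`. -/
def Paired (μ : MeasureTheory.Measure X) (A : H → Lp ℂ 2 μ) (ξ η : H) : Prop :=
  ⟪ξ, η⟫ = ⟪A ξ, A η⟫

/-- `A : H → L²₊(X,μ)` is an absolute pairing: it is an absolute map
(`|⟨ξ,η⟩| ≤ ⟨|ξ|,|η|⟩` with equality for `ξ = η`), and for every `ξ ∈ H` and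
`f ∈ L²₊(X,μ)` there is `η ∈ H` with `|η| = f` paired with `ξ`. -/
def IsAbsolutePairing (μ : MeasureTheory.Measure X) (A : H → Lp ℂ 2 μ) : Prop :=
  (∀ ξ, AeNonneg μ (A ξ)) ∧
  (∀ ξ η : H, ‖⟪ξ, η⟫‖ ≤ (⟪A ξ, A η⟫ : ℂ).re) ∧
  (∀ ξ : H, ‖⟪ξ, ξ⟫‖ = (⟪A ξ, A ξ⟫ : ℂ).re) ∧
  (∀ ξ : H, ∀ f : Lp ℂ 2 μ, AeNonneg μ f → ∃ η : H, A η = f ∧ Paired μ A ξ η)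

/-- `a` is dominated by `b` (with respect to the absolute map `A`): `D(a)` is a
generalized ideal of `D(b)` and `Re a(ξ,η) ≥ b(|ξ|,|η|)` for paired `ξ, η ∈ D(a)`. -/
def DominatedBy (μ : MeasureTheory.Measure X) (A : H → Lp ℂ 2 μ)
    (a : QForm H) (b : QForm (Lp ℂ 2 μ)) : Prop :=
  (∀ ξ ∈ a.dom, A ξ ∈ b.dom ∧
    ∀ f ∈ b.dom, (∀ᵐ x ∂μ, (f x).im = 0 ∧ 0 ≤ (f x).re ∧ (f x).re ≤ (A ξ x).re) →
      ∃ η ∈ a.dom, A η = f ∧ Paired μ A ξ η) ∧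
  (∀ ξ ∈ a.dom, ∀ η ∈ a.dom, Paired μ A ξ η →
    (b.sesq (A ξ) (A η)).re ≤ (a.sesq ξ η).re)

end

/-!
The form domain `D(a)` with the inner product of the form norm is a Hilbert space, so `D_a` is
dense iff every `ζ ∈ D(a)` form-orthogonal to `D_a` vanishes. Domination transfers the
orthogonality to `f = |ζ| ≥ 0`: for every `g ∈ D_b` with `0 ≤ g ≤ f`, lifting `g` to an `η`
paired with `ζ` (which lies in `D_a` by the hypotheses on the ideals) gives `b(f, g) ≤ a(ζ, η) = 0`
in the shifted form inner products. Approximating `f` in form norm by elements of `D_b` and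
clamping them to `[0, f]` with the lattice operations of the Beurling–Deny criterion yields such
`g` that are bounded in form norm and converge to `f` in `L²`, hence weakly in the form Hilbert
space. In the limit `b(f, f) ≤ 0`, so `|ζ| = 0` and `ζ = 0`.
-/

open Filter Topology ContinuousLinearMap
open scoped InnerProductSpace

noncomputable section

/-- The bound at `n * t` makes `φ` continuous at `0`. -/
lemma AddMonoidHom.map_real_eq_mul_of_abs_le (φ : ℝ →+ ℝ) {a b : ℝ} (hb : 0 ≤ b)
    (hφ : ∀ t, |φ t| ≤ a + b * t ^ 2) (t : ℝ) : φ t = t * φ 1 := by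
  have ha : 0 ≤ a := by simpa using hφ 0
  have hcont : Continuous φ := by
    refine continuous_of_continuousAt_zero φ (Metric.continuousAt_iff.2 fun ε hε => ?_)
    obtain ⟨n, hn⟩ := exists_nat_gt ((a + b) / ε)
    have hn0 : (0 : ℝ) < n := lt_of_le_of_lt (by positivity) hn
    refine ⟨1 / n, by positivity, fun {u} hu => ?_⟩
    simp only [dist_zero_right, Real.norm_eq_abs, map_zero] at hu ⊢
    have hnu : (n * u) ^ 2 ≤ 1 := by
      rw [← sq_abs, abs_mul, Nat.abs_cast]
      have := (lt_div_iff₀' hn0).1 hu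
      nlinarith [mul_nonneg hn0.le (abs_nonneg u)]
    have key := hφ (n * u)
    rw [← nsmul_eq_mul, map_nsmul, nsmul_eq_mul, abs_mul, Nat.abs_cast, nsmul_eq_mul] at key
    rw [div_lt_iff₀ hε] at hn
    nlinarith
  simpa using map_real_smul φ hcont t 1

/-- `T†` has dense range, and `⟪T† y, u n⟫ = ⟪y, T (u n)⟫`. -/
theorem ContinuousLinearMap.tendsto_inner_of_tendsto_apply {E G : Type*}
    [NormedAddCommGroup E] [InnerProductSpace ℝ E] [CompleteSpace E]
    [NormedAddCommGroup G] [InnerProductSpace ℝ G] [CompleteSpace G]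
    {T : E →L[ℝ] G} (hT : Function.Injective T) {u : ℕ → E} {v : E} {C : ℝ}
    (hu : ∀ n, ‖u n‖ ≤ C) (hTu : Tendsto (fun n => T (u n)) atTop (𝓝 (T v))) (w : E) :
    Tendsto (fun n => ⟪w, u n⟫_ℝ) atTop (𝓝 ⟪w, v⟫_ℝ) := by
  have hdense : Dense ((adjoint T).range : Set E) := by
    rw [Submodule.dense_iff_topologicalClosure_eq_top, Submodule.topologicalClosure_eq_top_iff,
      ContinuousLinearMap.orthogonal_range, adjoint_adjoint, LinearMap.ker_eq_bot.2 hT]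
  rw [Metric.tendsto_atTop]
  intro ε hε
  have hC : 0 < C + ‖v‖ + 1 := by linarith [(norm_nonneg _).trans (hu 0), norm_nonneg v]
  obtain ⟨_, hy, y, rfl⟩ := Metric.dense_iff.1 hdense w (ε / 3 / (C + ‖v‖ + 1)) (by positivity)
  obtain ⟨N, hN⟩ := Metric.tendsto_atTop.1 hTu (ε / 3 / (‖y‖ + 1)) (by positivity)
  refine ⟨N, fun n hn => ?_⟩
  rw [Metric.mem_ball, dist_eq_norm] at hy
  simp only [dist_eq_norm] at hN ⊢
  have hsplit : ⟪w, u n⟫_ℝ - ⟪w, v⟫_ℝ = ⟪w - adjoint T y, u n - v⟫_ℝ + ⟪y, T (u n) - T v⟫_ℝ := by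
    rw [← map_sub, ← adjoint_inner_left, ← inner_add_left, sub_add_cancel, inner_sub_right]
  have h1 : |⟪w - adjoint T y, u n - v⟫_ℝ| ≤ ε / 3 / (C + ‖v‖ + 1) * (C + ‖v‖ + 1) := by
    refine (abs_real_inner_le_norm _ _).trans (mul_le_mul ?_ ?_ (norm_nonneg _) (by positivity))
    · rw [← norm_neg, neg_sub]; exact hy.le
    · linarith [norm_sub_le (u n) v, hu n]
  have h2 : |⟪y, T (u n) - T v⟫_ℝ| ≤ (‖y‖ + 1) * (ε / 3 / (‖y‖ + 1)) :=
    (abs_real_inner_le_norm _ _).trans (mul_le_mul (by linarith) (hN n hn).le (norm_nonneg _)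
      (by positivity))
  rw [div_mul_cancel₀ _ hC.ne'] at h1
  rw [mul_div_cancel₀ _ (by positivity : ‖y‖ + 1 ≠ 0)] at h2
  rw [Real.norm_eq_abs, hsplit]
  calc _ ≤ _ := abs_add_le _ _
    _ < ε := by linarith

/-- `(|a| - |a - c| + c) / 2` is `a` clamped to `[0, c]`. -/
lemma clamp_bounds {a c : ℝ} (hc : 0 ≤ c) :
    0 ≤ (|a| - |a - c| + c) / 2 ∧ (|a| - |a - c| + c) / 2 ≤ c ∧
      |(|a| - |a - c| + c) / 2| ≤ |a| ∧ |c - (|a| - |a - c| + c) / 2| ≤ |c - a| := by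
  rcases abs_cases a with ⟨ha, _⟩ | ⟨ha, _⟩ <;>
    rcases abs_cases (a - c) with ⟨hac, _⟩ | ⟨hac, _⟩ <;>
    rw [ha, hac] <;> refine ⟨by linarith, by linarith, abs_le.2 ⟨?_, ?_⟩, abs_le.2 ⟨?_, ?_⟩⟩ <;>
    cases abs_cases a <;> cases abs_cases (c - a) <;> linarith

namespace QForm

variable {F : Type*} [NormedAddCommGroup F] [InnerProductSpace ℂ F]

def formInner (q : QForm F) (s : ℝ) (f g : F) : ℝ :=
  (q.normSq s (f + g) - q.normSq s (f - g)) / 4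

def Coercive (q : QForm F) (s : ℝ) : Prop :=
  ∀ f ∈ q.dom, ‖f‖ ^ 2 ≤ q.normSq s f

variable {q : QForm F} {s lam : ℝ}

lemma Q_zero : q.Q 0 = 0 := by
  simpa using q.smul_eq 0 0 q.dom.zero_mem

lemma normSq_zero : q.normSq s 0 = 0 := by
  simp [normSq, Q_zero]

lemma normSq_smul (c : ℂ) {f : F} (hf : f ∈ q.dom) :
    q.normSq s (c • f) = ‖c‖ ^ 2 * q.normSq s f := by
  rw [normSq, normSq, q.smul_eq c f hf, norm_smul]
  ring

lemma normSq_neg {f : F} (hf : f ∈ q.dom) : q.normSq s (-f) = q.normSq s f := by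
  simpa using normSq_smul (s := s) (-1) hf

lemma normSq_sub_comm {f g : F} (hf : f ∈ q.dom) (hg : g ∈ q.dom) :
    q.normSq s (f - g) = q.normSq s (g - f) := by
  rw [← normSq_neg (q.dom.sub_mem hg hf), neg_sub]

lemma normSq_add_add_normSq_sub {f g : F} (hf : f ∈ q.dom) (hg : g ∈ q.dom) :
    q.normSq s (f + g) + q.normSq s (f - g) = 2 * q.normSq s f + 2 * q.normSq s g := by
  simp only [normSq]
  linear_combination q.parallelogram f hf g hg + s * parallelogram_law_with_norm ℂ f g

lemma normSq_le_normSq_of_le {f : F} {s' : ℝ} (h : s ≤ s') : q.normSq s f ≤ q.normSq s' f := by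
  simp only [normSq]
  nlinarith [sq_nonneg ‖f‖]

lemma coercive_of_lower_bound (hlb : ∀ f ∈ q.dom, -lam * ‖f‖ ^ 2 ≤ q.Q f)
    (hs : lam + 1 ≤ s) : q.Coercive s := fun f hf => by
  simp only [normSq]
  nlinarith [hlb f hf, sq_nonneg ‖f‖]

lemma normSq_le_mul_normSq_of_lower_bound (hlb : ∀ f ∈ q.dom, -lam * ‖f‖ ^ 2 ≤ q.Q f)
    (hs : lam + 1 ≤ s) {f : F} (hf : f ∈ q.dom) :
    q.normSq s f ≤ (s - lam) * q.normSq (lam + 1) f := by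
  simp only [normSq]
  nlinarith [hlb f hf, sq_nonneg ‖f‖]

lemma Coercive.normSq_nonneg (hq : q.Coercive s) {f : F} (hf : f ∈ q.dom) :
    0 ≤ q.normSq s f :=
  (sq_nonneg _).trans (hq f hf)

lemma formInner_comm {f g : F} (hf : f ∈ q.dom) (hg : g ∈ q.dom) :
    q.formInner s f g = q.formInner s g f := by
  rw [formInner, formInner, add_comm, normSq_sub_comm hf hg]

lemma formInner_self {f : F} (hf : f ∈ q.dom) : q.formInner s f f = q.normSq s f := by
  rw [formInner, sub_self, normSq_zero, ← two_smul ℂ f, normSq_smul 2 hf]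
  norm_num

lemma formInner_add_left {f g h : F} (hf : f ∈ q.dom) (hg : g ∈ q.dom) (hh : h ∈ q.dom) :
    q.formInner s (f + g) h = q.formInner s f h + q.formInner s g h := by
  have e1 := normSq_add_add_normSq_sub (s := s) (q.dom.add_mem hf hh) hg
  have e2 := normSq_add_add_normSq_sub (s := s) (q.dom.sub_mem hf hh) hg
  have e3 := normSq_add_add_normSq_sub (s := s) (q.dom.add_mem hg hh) hf
  have e4 := normSq_add_add_normSq_sub (s := s) (q.dom.sub_mem hg hh) hf
  have n1 : q.normSq s (g + h - f) = q.normSq s (f - g - h) := by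
    rw [normSq_sub_comm (q.dom.add_mem hg hh) hf, sub_sub]
  have n2 : q.normSq s (g - h - f) = q.normSq s (f - g + h) := by
    rw [normSq_sub_comm (q.dom.sub_mem hg hh) hf]; congr 1; abel
  rw [n1] at e3
  rw [n2] at e4
  simp only [formInner, show f + h + g = f + g + h by abel, show f + h - g = f - g + h by abel,
    show f - h + g = f + g - h by abel, show f - h - g = f - g - h by abel,
    show g + h + f = f + g + h by abel, show g - h + f = f + g - h by abel] at *
  linarith

lemma abs_formInner_le (hq : q.Coercive s) {f g : F} (hf : f ∈ q.dom) (hg : g ∈ q.dom) :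
    |q.formInner s f g| ≤ (q.normSq s f + q.normSq s g) / 2 := by
  have := normSq_add_add_normSq_sub (s := s) hf hg
  rw [formInner, abs_le]
  constructor <;>
    linarith [hq.normSq_nonneg (q.dom.add_mem hf hg), hq.normSq_nonneg (q.dom.sub_mem hf hg)]

lemma normSq_real_smul (t : ℝ) {f : F} (hf : f ∈ q.dom) :
    q.normSq s (t • f) = t ^ 2 * q.normSq s f := by
  rw [RCLike.real_smul_eq_coe_smul (K := ℂ), normSq_smul _ hf, RCLike.norm_ofReal, sq_abs]

lemma formInner_real_smul_left (hq : q.Coercive s) (t : ℝ) {f g : F} (hf : f ∈ q.dom)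
    (hg : g ∈ q.dom) : q.formInner s (t • f) g = t * q.formInner s f g := by
  let φ : ℝ →+ ℝ := AddMonoidHom.mk' (fun t => q.formInner s (t • f) g) fun t u => by
    simp only [add_smul]
    exact formInner_add_left (q.dom.smul_of_tower_mem t hf) (q.dom.smul_of_tower_mem u hf) hg
  have hφ : ∀ t, |φ t| ≤ q.normSq s g / 2 + q.normSq s f / 2 * t ^ 2 := fun t => by
    have := abs_formInner_le hq (q.dom.smul_of_tower_mem t hf) hg
    rw [normSq_real_smul t hf] at this
    simp only [φ, AddMonoidHom.mk'_apply]
    linarith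
  simpa [φ] using φ.map_real_eq_mul_of_abs_le (by linarith [hq.normSq_nonneg hf]) hφ t

lemma re_sesq (f g : F) : (q.sesq f g).re = (q.Q (f + g) - q.Q (f - g)) / 4 := by
  have h3 : Complex.I ^ 3 = -Complex.I := by rw [pow_succ, Complex.I_sq]; ring
  have h4 : Complex.I ^ 4 = 1 := by rw [pow_succ, h3]; simp
  simp only [sesq, Finset.sum_range_succ, Finset.sum_range_zero]
  norm_num [Complex.I_sq, h3, h4]
  rw [← sub_eq_add_neg]
  ring

lemma formInner_eq_re_sesq_add (f g : F) :
    q.formInner s f g = (q.sesq f g).re + s * (⟪f, g⟫ : ℂ).re := by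
  have := re_inner_eq_norm_add_mul_self_sub_norm_sub_mul_self_div_four (𝕜 := ℂ) f g
  rw [formInner, re_sesq, normSq, normSq, show (⟪f, g⟫ : ℂ).re = RCLike.re ⟪f, g⟫ from rfl, this]
  ring

lemma ClosedWith.of_lower_bound (hlb : ∀ f ∈ q.dom, -lam * ‖f‖ ^ 2 ≤ q.Q f)
    (hs : lam + 1 ≤ s) (hcl : q.ClosedWith (lam + 1)) : q.ClosedWith s := by
  intro u hu hCauchy
  obtain ⟨v, hv, hlim⟩ := hcl u hu fun ε hε => (hCauchy ε hε).imp fun N hN i hi j hj =>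
    (normSq_le_normSq_of_le hs).trans_lt (hN i hi j hj)
  refine ⟨v, hv, squeeze_zero (fun n => ?_) (fun n => ?_) (by simpa using hlim.const_mul (s - lam))⟩
  · exact (coercive_of_lower_bound hlb hs).normSq_nonneg (q.dom.sub_mem (hu n) hv)
  · exact normSq_le_mul_normSq_of_lower_bound hlb hs (q.dom.sub_mem (hu n) hv)

set_option linter.unusedVariables false in
/-- The domain `q.dom` as a real vector space, to carry the inner product `q.formInner s`;
the shift `s` enters only through that inner product. -/
def FormSpace (q : QForm F) (s : ℝ) : Type _ := q.dom

namespace FormSpace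

instance : AddCommGroup (FormSpace q s) := inferInstanceAs (AddCommGroup q.dom)

instance : Module ℝ (FormSpace q s) := inferInstanceAs (Module ℝ q.dom)

def val : FormSpace q s →ₗ[ℝ] F where
  toFun := fun x : q.dom => x.1
  map_add' _ _ := rfl
  map_smul' _ _ := rfl

def mk (f : F) (hf : f ∈ q.dom) : FormSpace q s := (⟨f, hf⟩ : q.dom)

@[simp] lemma val_mk {f : F} (hf : f ∈ q.dom) : val (mk (s := s) f hf) = f := rfl

lemma val_mem (x : FormSpace q s) : val x ∈ q.dom := (x : q.dom).2

lemma val_injective : Function.Injective (val : FormSpace q s → F) :=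
  fun _ _ h => Subtype.ext h

instance [hq : Fact (q.Coercive s)] : InnerProductSpace.Core ℝ (FormSpace q s) where
  inner x y := q.formInner s (val x) (val y)
  conj_inner_symm x y := formInner_comm (val_mem y) (val_mem x)
  re_inner_nonneg x := by
    simpa [formInner_self (val_mem x)] using hq.out.normSq_nonneg (val_mem x)
  add_left x y z := by
    simp only [map_add]
    exact formInner_add_left (val_mem x) (val_mem y) (val_mem z)
  smul_left x y r := by
    simp only [map_smul]
    exact formInner_real_smul_left hq.out r (val_mem x) (val_mem y)
  definite x hx := by
    apply val_injective
    rw [formInner_self (val_mem x)] at hx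
    simpa [hx] using hq.out _ (val_mem x)

variable [Fact (q.Coercive s)]

instance : NormedAddCommGroup (FormSpace q s) :=
  InnerProductSpace.Core.toNormedAddCommGroup (𝕜 := ℝ)

instance : InnerProductSpace ℝ (FormSpace q s) := InnerProductSpace.ofCore _

lemma inner_def (x y : FormSpace q s) : ⟪x, y⟫_ℝ = q.formInner s (val x) (val y) := rfl

lemma norm_sq (x : FormSpace q s) : ‖x‖ ^ 2 = q.normSq s (val x) := by
  rw [← real_inner_self_eq_norm_sq, inner_def, formInner_self (val_mem x)]

lemma norm_val_le (x : FormSpace q s) : ‖val x‖ ≤ ‖x‖ :=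
  pow_le_pow_iff_left₀ (norm_nonneg _) (norm_nonneg _) two_ne_zero |>.1 <| by
    rw [norm_sq]; exact Fact.out (p := q.Coercive s) _ (val_mem x)

def valL : FormSpace q s →L[ℝ] F :=
  val.mkContinuous 1 fun x => by simpa using norm_val_le x

@[simp] lemma valL_apply (x : FormSpace q s) : valL x = val x := rfl

lemma valL_injective : Function.Injective (valL : FormSpace q s → F) := val_injective

lemma completeSpace (hcl : q.ClosedWith s) : CompleteSpace (FormSpace q s) := by
  refine Metric.complete_of_cauchySeq_tendsto fun u hu => ?_
  have hsq : ∀ x : FormSpace q s, ‖x‖ = √(q.normSq s (val x)) := fun x => by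
    rw [← norm_sq, Real.sqrt_sq (norm_nonneg x)]
  obtain ⟨v, hv, hlim⟩ := hcl (fun n => val (u n)) (fun n => val_mem _) fun ε hε => by
    obtain ⟨N, hN⟩ := Metric.cauchySeq_iff.1 hu (√ε) (Real.sqrt_pos.2 hε)
    refine ⟨N, fun i hi j hj => ?_⟩
    have h := pow_lt_pow_left₀ (dist_eq_norm (u i) (u j) ▸ hN i hi j hj) (norm_nonneg _)
      two_ne_zero
    rwa [norm_sq, map_sub, Real.sq_sqrt hε.le] at h
  refine ⟨mk v hv, tendsto_iff_norm_sub_tendsto_zero.2 ?_⟩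
  simp_rw [hsq, map_sub, val_mk]
  simpa using hlim.sqrt

lemma norm_le_norm_of_normSq_le {x y : FormSpace q s}
    (h : q.normSq s (val x) ≤ q.normSq s (val y)) : ‖x‖ ≤ ‖y‖ := by
  rwa [← pow_le_pow_iff_left₀ (norm_nonneg x) (norm_nonneg y) two_ne_zero, norm_sq, norm_sq]

end FormSpace

open FormSpace

def formSubspace (q : QForm F) (s : ℝ) (D : Submodule ℂ F) : Submodule ℝ (FormSpace q s) :=
  (D.restrictScalars ℝ).comap FormSpace.val

variable [Fact (q.Coercive s)] {D : Submodule ℂ F}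

lemma dense_formSubspace (hlb : ∀ f ∈ q.dom, -lam * ‖f‖ ^ 2 ≤ q.Q f) (hs : lam + 1 ≤ s)
    (hD : D ≤ q.dom) (hdense : ∀ f ∈ q.dom, ∀ ε > 0, ∃ g ∈ D, q.normSq (lam + 1) (f - g) < ε) :
    Dense (q.formSubspace s D : Set (FormSpace q s)) := by
  refine Metric.dense_iff.2 fun x ε hε => ?_
  have hs' : 0 < s - lam := by linarith
  obtain ⟨g, hgD, hg⟩ := hdense (val x) (val_mem x) (ε ^ 2 / (s - lam)) (by positivity)
  refine ⟨FormSpace.mk g (hD hgD), ?_, hgD⟩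
  rw [Metric.mem_ball, dist_eq_norm, ← pow_lt_pow_iff_left₀ (norm_nonneg _) hε.le two_ne_zero,
    norm_sq, map_sub, val_mk, normSq_sub_comm (hD hgD) (val_mem x)]
  calc q.normSq s (val x - g) ≤ (s - lam) * q.normSq (lam + 1) (val x - g) :=
        normSq_le_mul_normSq_of_lower_bound hlb hs (q.dom.sub_mem (val_mem x) (hD hgD))
    _ < ε ^ 2 := by rwa [lt_div_iff₀' hs'] at hg

lemma exists_normSq_sub_lt_of_dense (hD : Dense (q.formSubspace s D : Set (FormSpace q s)))
    {s' : ℝ} (hs' : s' ≤ s) {f : F} (hf : f ∈ q.dom) {ε : ℝ} (hε : 0 < ε) :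
    ∃ g ∈ D, q.normSq s' (f - g) < ε := by
  obtain ⟨y, hy, hyD⟩ := Metric.dense_iff.1 hD (FormSpace.mk f hf) (√ε) (Real.sqrt_pos.2 hε)
  refine ⟨val y, hyD, (normSq_le_normSq_of_le hs').trans_lt ?_⟩
  rw [Metric.mem_ball, dist_comm, dist_eq_norm, ← pow_lt_pow_iff_left₀ (norm_nonneg _)
    (Real.sqrt_nonneg _) two_ne_zero, norm_sq, Real.sq_sqrt hε.le, map_sub, val_mk] at hy
  exact hy

end QForm

lemma MeasureTheory.Lp.norm_eq_norm_of_ae_norm_eq {X E : Type*} [MeasurableSpace X]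
    {μ : Measure X} [NormedAddCommGroup E] {p : ENNReal} {f g : Lp E p μ}
    (h : ∀ᵐ x ∂μ, ‖f x‖ = ‖g x‖) : ‖f‖ = ‖g‖ :=
  le_antisymm (norm_le_norm_of_ae_le (h.mono fun _ hx => hx.le))
    (norm_le_norm_of_ae_le (h.mono fun _ hx => hx.ge))

lemma AeNonneg.ae_eq_re {X : Type*} [MeasurableSpace X] {μ : Measure X} {f : Lp ℂ 2 μ}
    (hf : AeNonneg μ f) : ∀ᵐ x ∂μ, f x = ((f x).re : ℂ) :=
  hf.mono fun _ hx => Complex.ext (by simp) (by simp [hx.1])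

def AeNonnegLe {X : Type*} [MeasurableSpace X] (μ : Measure X) (g f : Lp ℂ 2 μ) : Prop :=
  ∀ᵐ x ∂μ, (g x).im = 0 ∧ 0 ≤ (g x).re ∧ (g x).re ≤ (f x).re

namespace QForm.BeurlingDeny

open FormSpace

variable {X : Type*} [MeasurableSpace X] {μ : Measure X} {b : QForm (Lp ℂ 2 μ)} {s : ℝ}
  [Fact (b.Coercive s)]

lemma exists_conj (hBD : b.BeurlingDeny) (w : FormSpace b s) :
    ∃ w' : FormSpace b s, (∀ᵐ x ∂μ, val w' x = starRingEnd ℂ (val w x)) ∧ ‖w'‖ = ‖w‖ := by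
  obtain ⟨g, hg, hae, hQ⟩ := hBD.1 (val w) (val_mem w)
  have hnorm : ‖g‖ = ‖val w‖ := Lp.norm_eq_norm_of_ae_norm_eq (hae.mono fun x hx => by simp [hx])
  refine ⟨FormSpace.mk g hg, hae, le_antisymm ?_ ?_⟩ <;>
  · apply norm_le_norm_of_normSq_le
    simp [normSq, hQ, hnorm]

lemma exists_abs (hBD : b.BeurlingDeny) (w : FormSpace b s) :
    ∃ w' : FormSpace b s, (∀ᵐ x ∂μ, val w' x = ((‖val w x‖ : ℝ) : ℂ)) ∧ ‖w'‖ ≤ ‖w‖ := by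
  obtain ⟨g, hg, hae, hQ⟩ := hBD.2 (val w) (val_mem w)
  have hnorm : ‖g‖ = ‖val w‖ := Lp.norm_eq_norm_of_ae_norm_eq (hae.mono fun x hx => by simp [hx])
  refine ⟨FormSpace.mk g hg, hae, norm_le_norm_of_normSq_le ?_⟩
  simp only [val_mk, normSq, hnorm]
  linarith

lemma exists_re (hBD : b.BeurlingDeny) (w : FormSpace b s) :
    ∃ r : FormSpace b s, (∀ᵐ x ∂μ, val r x = ((val w x).re : ℂ)) ∧ ‖r‖ ≤ ‖w‖ := by
  obtain ⟨w', hae, hnorm⟩ := exists_conj hBD w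
  refine ⟨(2⁻¹ : ℝ) • (w + w'), ?_, ?_⟩
  · filter_upwards [hae, Lp.coeFn_smul (2⁻¹ : ℝ) (val w + val w'), Lp.coeFn_add (val w) (val w')]
      with x hx h1 h2
    rw [map_smul, map_add, h1, Pi.smul_apply, h2, Pi.add_apply, hx, Complex.add_conj]
    simp
  · calc ‖(2⁻¹ : ℝ) • (w + w')‖ ≤ 2⁻¹ * (‖w‖ + ‖w'‖) := by
          rw [norm_smul, Real.norm_of_nonneg (by norm_num)]
          gcongr
          exact norm_add_le _ _
      _ = ‖w‖ := by rw [hnorm]; ring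

lemma exists_ae_eq_clamp (hBD : b.BeurlingDeny) {f : FormSpace b s} (hf : AeNonneg μ (val f))
    (g : FormSpace b s) :
    ∃ h : FormSpace b s, (∀ᵐ x ∂μ, val h x =
      (((|(val g x).re| - |(val g x).re - (val f x).re| + (val f x).re) / 2 : ℝ) : ℂ)) ∧
      ‖h‖ ≤ ‖f‖ + ‖g‖ := by
  obtain ⟨r, hr, hrg⟩ := exists_re hBD g
  obtain ⟨p, hp, hpr⟩ := exists_abs hBD r
  obtain ⟨d, hd, hdr⟩ := exists_abs hBD (r - f)
  refine ⟨(2⁻¹ : ℝ) • (p - d + f), ?_, ?_⟩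
  · filter_upwards [hr, hp, hd, hf.ae_eq_re, Lp.coeFn_smul (2⁻¹ : ℝ) (val p - val d + val f),
      Lp.coeFn_add (val p - val d) (val f), Lp.coeFn_sub (val p) (val d),
      Lp.coeFn_sub (val r) (val f)] with x hr hp hd hfx h1 h2 h3 h4
    rw [map_smul, map_add, map_sub, h1, Pi.smul_apply, h2, Pi.add_apply, h3, Pi.sub_apply, hp,
      hd, map_sub, h4, Pi.sub_apply, hr]
    generalize (val f x).re = c at hfx ⊢
    rw [hfx]
    simp only [← Complex.ofReal_sub, Complex.norm_real, Real.norm_eq_abs, Complex.real_smul]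
    push_cast
    ring
  · calc ‖(2⁻¹ : ℝ) • (p - d + f)‖ ≤ 2⁻¹ * (‖p‖ + ‖d‖ + ‖f‖) := by
          rw [norm_smul, Real.norm_of_nonneg (by norm_num)]
          gcongr
          exact (norm_add_le _ _).trans (by gcongr; exact norm_sub_le _ _)
      _ ≤ 2⁻¹ * (‖r‖ + (‖r‖ + ‖f‖) + ‖f‖) := by
          gcongr
          exact hdr.trans (norm_sub_le _ _)
      _ ≤ ‖f‖ + ‖g‖ := by linarith

lemma exists_clamp (hBD : b.BeurlingDeny) {f : FormSpace b s} (hf : AeNonneg μ (val f))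
    (g : FormSpace b s) :
    ∃ h : FormSpace b s, AeNonnegLe μ (val h) (val f) ∧ (∀ᵐ x ∂μ, ‖val h x‖ ≤ ‖val g x‖) ∧
      ‖val f - val h‖ ≤ ‖val f - val g‖ ∧ ‖h‖ ≤ ‖f‖ + ‖g‖ := by
  obtain ⟨h, hval, hnorm⟩ := exists_ae_eq_clamp hBD hf g
  refine ⟨h, ?_, ?_, Lp.norm_le_norm_of_ae_le ?_, hnorm⟩
  · filter_upwards [hval, hf] with x hx hf
    obtain ⟨h0, hc, -, -⟩ := clamp_bounds (a := (val g x).re) hf.2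
    rw [hx, Complex.ofReal_im, Complex.ofReal_re]
    exact ⟨rfl, h0, hc⟩
  · filter_upwards [hval, hf] with x hx hf
    rw [hx, Complex.norm_real, Real.norm_eq_abs]
    exact (clamp_bounds hf.2).2.2.1.trans (Complex.abs_re_le_norm _)
  · filter_upwards [hval, hf, hf.ae_eq_re, Lp.coeFn_sub (val f) (val h),
      Lp.coeFn_sub (val f) (val g)] with x hx hf hfx h1 h2
    rw [h1, h2, Pi.sub_apply, Pi.sub_apply, hx]
    calc _ = |(val f x).re -
          (|(val g x).re| - |(val g x).re - (val f x).re| + (val f x).re) / 2| := by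
          nth_rw 1 [hfx]
          rw [← Complex.ofReal_sub, Complex.norm_real, Real.norm_eq_abs]
      _ ≤ |(val f x).re - (val g x).re| := (clamp_bounds hf.2).2.2.2
      _ ≤ ‖val f x - val g x‖ := by
          rw [← Complex.sub_re]; exact Complex.abs_re_le_norm _

theorem eq_zero_of_formInner_nonpos (hBD : b.BeurlingDeny) [CompleteSpace (FormSpace b s)]
    {Db : Submodule ℂ (Lp ℂ 2 μ)}
    (hDbIdeal : ∀ f ∈ Db, ∀ g ∈ b.dom, (∀ᵐ x ∂μ, ‖g x‖ ≤ ‖f x‖) → g ∈ Db)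
    (hDb : Dense (b.formSubspace s Db : Set (FormSpace b s)))
    {f : FormSpace b s} (hf : AeNonneg μ (val f))
    (hnonpos : ∀ g ∈ b.formSubspace s Db, AeNonnegLe μ (val g) (val f) → ⟪f, g⟫_ℝ ≤ 0) :
    f = 0 := by
  have happrox : ∀ n : ℕ, ∃ h ∈ b.formSubspace s Db, AeNonnegLe μ (val h) (val f) ∧
      ‖val f - val h‖ ≤ 1 / (n + 1) ∧ ‖h‖ ≤ 2 * ‖f‖ + 1 := by
    intro n
    obtain ⟨g, hg, hgD⟩ := Metric.dense_iff.1 hDb f (1 / (n + 1)) (by positivity)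
    rw [Metric.mem_ball, dist_comm, dist_eq_norm] at hg
    obtain ⟨h, hle, habs, hdist, hnorm⟩ := exists_clamp hBD hf g
    have hg1 : ‖f - g‖ ≤ 1 := hg.le.trans (div_le_one_of_le₀ (by simp) (by positivity))
    refine ⟨h, hDbIdeal _ hgD _ (val_mem h) habs, hle, ?_, ?_⟩
    · calc ‖val f - val h‖ ≤ ‖val (f - g)‖ := by rwa [map_sub]
        _ ≤ 1 / (n + 1) := (norm_val_le _).trans hg.le
    · linarith [norm_le_insert' g f, norm_sub_rev f g]
  choose h hD hle hdist hnorm using happrox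
  have hlim : Tendsto (fun n => valL (h n)) atTop (𝓝 (valL f)) := by
    refine tendsto_iff_norm_sub_tendsto_zero.2 (squeeze_zero (fun _ => norm_nonneg _)
      (fun n => ?_) tendsto_one_div_add_atTop_nhds_zero_nat)
    rw [valL_apply, valL_apply, norm_sub_rev]
    exact hdist n
  have hweak := tendsto_inner_of_tendsto_apply valL_injective hnorm hlim f
  exact real_inner_self_nonpos.1 (le_of_tendsto' hweak fun n => hnonpos _ (hD n) (hle n))

end QForm.BeurlingDeny

section Domination

open QForm QForm.FormSpace

variable {X : Type*} [MeasurableSpace X] {μ : Measure X}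
  {H : Type*} [NormedAddCommGroup H] [InnerProductSpace ℂ H] {A : H → Lp ℂ 2 μ}

lemma IsAbsolutePairing.eq_zero_of_eq_zero (hA : IsAbsolutePairing μ A) {ξ : H} (h : A ξ = 0) :
    ξ = 0 := by
  have := hA.2.2.1 ξ
  rw [h, inner_zero_left, Complex.zero_re, norm_eq_zero] at this
  exact inner_self_eq_zero.1 this

lemma DominatedBy.formInner_le {a : QForm H} {b : QForm (Lp ℂ 2 μ)} (hdom : DominatedBy μ A a b)
    (s : ℝ) {ξ η : H} (hξ : ξ ∈ a.dom) (hη : η ∈ a.dom) (hpair : Paired μ A ξ η) :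
    b.formInner s (A ξ) (A η) ≤ a.formInner s ξ η := by
  rw [QForm.formInner_eq_re_sesq_add, QForm.formInner_eq_re_sesq_add, hpair]
  linarith [hdom.2 ξ hξ η hη hpair]

theorem DominatedBy.dense_formSubspace {a : QForm H} {b : QForm (Lp ℂ 2 μ)}
    (hA : IsAbsolutePairing μ A) (hdom : DominatedBy μ A a b) (hBD : b.BeurlingDeny) {s : ℝ}
    [Fact (a.Coercive s)] [Fact (b.Coercive s)] [CompleteSpace (FormSpace a s)]
    [CompleteSpace (FormSpace b s)] {Da : Submodule ℂ H} {Db : Submodule ℂ (Lp ℂ 2 μ)}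
    (hDaIdeal : ∀ ξ ∈ Da, ∀ η ∈ a.dom, (∀ᵐ x ∂μ, (A η x).re ≤ (A ξ x).re) → η ∈ Da)
    (hDbIdeal : ∀ f ∈ Db, ∀ g ∈ b.dom, (∀ᵐ x ∂μ, ‖g x‖ ≤ ‖f x‖) → g ∈ Db)
    (habs : ∀ f ∈ Db, AeNonneg μ f → (∃ ξ ∈ a.dom, A ξ = f) → ∃ ξ ∈ Da, A ξ = f)
    (hDb : Dense (b.formSubspace s Db : Set (FormSpace b s))) :
    Dense (a.formSubspace s Da : Set (FormSpace a s)) := by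
  rw [Submodule.dense_iff_topologicalClosure_eq_top, Submodule.topologicalClosure_eq_top_iff,
    Submodule.eq_bot_iff]
  intro ζ hζ
  obtain ⟨hAζ, hlift⟩ := hdom.1 _ (val_mem ζ)
  suffices FormSpace.mk (s := s) (A (val ζ)) hAζ = 0 from
    val_injective (hA.eq_zero_of_eq_zero (by simpa using congrArg val this))
  refine BeurlingDeny.eq_zero_of_formInner_nonpos hBD hDbIdeal hDb (hA.1 _) fun g hgD hg => ?_
  obtain ⟨η, hη, hAη, hpair⟩ := hlift (val g) (val_mem g) hg
  have hηDa : η ∈ Da := by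
    obtain ⟨ρ, hρ, hAρ⟩ := habs (val g) hgD (hg.mono fun x hx => ⟨hx.1, hx.2.1⟩) ⟨η, hη, hAη⟩
    exact hDaIdeal ρ hρ η hη (ae_of_all _ fun x => by rw [hAη, hAρ])
  calc _ = b.formInner s (A (val ζ)) (A η) := by rw [inner_def, val_mk, hAη]
    _ ≤ a.formInner s (val ζ) η := hdom.formInner_le s (val_mem ζ) hη hpair
    _ = 0 := by
      rw [← val_mk (s := s) hη, ← inner_def, real_inner_comm]
      exact (Submodule.mem_orthogonal _ _).1 hζ _ hηDa

end Domination

theorem stmt0_general {X : Type*} [MeasurableSpace X] {μ : MeasureTheory.Measure X}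
    {H : Type*} [NormedAddCommGroup H] [InnerProductSpace ℂ H]
    (A : H → Lp ℂ 2 μ) (hA : IsAbsolutePairing μ A)
    (a : QForm H) (b : QForm (Lp ℂ 2 μ)) (lama lamb : ℝ)
    (halb : ∀ ξ ∈ a.dom, -lama * ‖ξ‖ ^ 2 ≤ a.Q ξ)
    (hblb : ∀ f ∈ b.dom, -lamb * ‖f‖ ^ 2 ≤ b.Q f)
    (haclosed : a.ClosedWith (lama + 1)) (hbclosed : b.ClosedWith (lamb + 1))
    (hBD : b.BeurlingDeny)
    (Da : Submodule ℂ H) (Db : Submodule ℂ (Lp ℂ 2 μ))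
    (hDb : Db ≤ b.dom)
    (hDaIdeal : ∀ ξ ∈ Da, ∀ η ∈ a.dom,
      (∀ᵐ x ∂μ, (A η x).re ≤ (A ξ x).re) → η ∈ Da)
    (hDbIdeal : ∀ f ∈ Db, ∀ g ∈ b.dom,
      (∀ᵐ x ∂μ, ‖g x‖ ≤ ‖f x‖) → g ∈ Db)
    (hdom : DominatedBy μ A a b)
    (habs : ∀ f ∈ Db, AeNonneg μ f → (∃ ξ ∈ a.dom, A ξ = f) → ∃ ξ ∈ Da, A ξ = f)
    (hDbdense : ∀ f ∈ b.dom, ∀ ε > (0 : ℝ), ∃ g ∈ Db, b.normSq (lamb + 1) (f - g) < ε) :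
    ∀ ξ ∈ a.dom, ∀ ε > (0 : ℝ), ∃ η ∈ Da, a.normSq (lama + 1) (ξ - η) < ε := by
  intro ξ hξ ε hε
  -- one shift for both forms, so that domination compares the two form inner products
  set S := max lama lamb + 1
  have hSa : lama + 1 ≤ S := by simp [S]
  have hSb : lamb + 1 ≤ S := by simp [S]
  have : Fact (a.Coercive S) := ⟨QForm.coercive_of_lower_bound halb hSa⟩
  have : Fact (b.Coercive S) := ⟨QForm.coercive_of_lower_bound hblb hSb⟩
  have := QForm.FormSpace.completeSpace (haclosed.of_lower_bound halb hSa)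
  have := QForm.FormSpace.completeSpace (hbclosed.of_lower_bound hblb hSb)
  have hDense := hdom.dense_formSubspace hA hBD hDaIdeal hDbIdeal habs
    (QForm.dense_formSubspace hblb hSb hDb hDbdense)
  exact QForm.exists_normSq_sub_lt_of_dense hDense hSa hξ hε

/-- Theorem: uniqueness of form extensions via domination.
Let `|·| = A : H → L²₊(X,μ)` be an absolute pairing, `a` a lower bounded closed quadratic
form on `H`, `b` a lower bounded closed quadratic form on `L²(X,μ)` satisfying the first
Beurling–Deny criterion, `D_a ⊆ D(a)` an ideal of `D(a)` and `D_b ⊆ D(b)` an ideal of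
`D(b)`. Assume that `a` is dominated by `b` and `D_b⁺ ∩ |D(a)| ⊆ |D_a|`. If `D_b` is a
form core for `b`, then `D_a` is a form core for `a`. -/
theorem stmt0 {X : Type*} [MeasurableSpace X] {μ : MeasureTheory.Measure X}
    {H : Type*} [NormedAddCommGroup H] [InnerProductSpace ℂ H] [CompleteSpace H]
    (A : H → Lp ℂ 2 μ) (hA : IsAbsolutePairing μ A)
    (a : QForm H) (b : QForm (Lp ℂ 2 μ)) (lama lamb : ℝ)
    (halb : ∀ ξ ∈ a.dom, -lama * ‖ξ‖ ^ 2 ≤ a.Q ξ)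
    (hblb : ∀ f ∈ b.dom, -lamb * ‖f‖ ^ 2 ≤ b.Q f)
    (haclosed : a.ClosedWith (lama + 1)) (hbclosed : b.ClosedWith (lamb + 1))
    (hBD : b.BeurlingDeny)
    (Da : Submodule ℂ H) (Db : Submodule ℂ (Lp ℂ 2 μ))
    (hDa : Da ≤ a.dom) (hDb : Db ≤ b.dom)
    (hDaIdeal : ∀ ξ ∈ Da, ∀ η ∈ a.dom,
      (∀ᵐ x ∂μ, (A η x).re ≤ (A ξ x).re) → η ∈ Da)
    (hDbIdeal : ∀ f ∈ Db, ∀ g ∈ b.dom,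
      (∀ᵐ x ∂μ, ‖g x‖ ≤ ‖f x‖) → g ∈ Db)
    (hdom : DominatedBy μ A a b)
    (habs : ∀ f ∈ Db, AeNonneg μ f → (∃ ξ ∈ a.dom, A ξ = f) → ∃ ξ ∈ Da, A ξ = f)
    (hDbdense : ∀ f ∈ b.dom, ∀ ε > (0 : ℝ), ∃ g ∈ Db, b.normSq (lamb + 1) (f - g) < ε) :
    ∀ ξ ∈ a.dom, ∀ ε > (0 : ℝ), ∃ η ∈ Da, a.normSq (lama + 1) (ξ - η) < ε :=
  stmt0_general A hA a b lama lamb halb hblb haclosed hbclosed hBD Da Db hDb hDaIdeal hDbIdeal hdom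
    habs hDbdense
end
end

section
/- Let V be a complex Hilbert space, a, b ∈ V, and α, β ≥ 0 real numbers with α ≤ ‖a‖ and β ≤ ‖b‖. Define ã = (α/‖a‖)·a if a ≠ 0 and ã = 0 if a = 0, and define b̃ analogously from b and β. Then ‖ã − b̃‖² ≤ |α − β|² + ‖a − b‖². -/
open scoped ComplexInnerProductSpace Classical

/-! Writing `ã = s • a` and `b̃ = t • b` with `s, t ∈ [0, 1]` (also when `a = 0` or `b = 0`), expanding both squared norms
turns the claim into `2 (1 - s t) Re ⟪a, b⟫ ≤ ‖a‖² + ‖b‖² - 2 s t ‖a‖ ‖b‖`, which follows from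
Cauchy–Schwarz because `s t ≤ 1`; the remaining gap is `(‖a‖ - ‖b‖)² ≥ 0`. -/

section

variable {𝕜 E : Type*} [RCLike 𝕜] [SeminormedAddCommGroup E] [InnerProductSpace 𝕜 E]

theorem re_inner_ofReal_smul_ofReal_smul (a b : E) (s t : ℝ) :
    RCLike.re (inner 𝕜 ((s : 𝕜) • a) ((t : 𝕜) • b)) = s * t * RCLike.re (inner 𝕜 a b) := by
  rw [inner_smul_real_left, inner_smul_real_right, smul_smul, RCLike.smul_re]

theorem norm_ofReal_smul_sub_ofReal_smul_sq_le (a b : E) {s t : ℝ} (hst : s * t ≤ 1) :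
    ‖(s : 𝕜) • a - (t : 𝕜) • b‖ ^ 2 ≤ (s * ‖a‖ - t * ‖b‖) ^ 2 + ‖a - b‖ ^ 2 := by
  rw [norm_sub_sq (𝕜 := 𝕜), norm_sub_sq (𝕜 := 𝕜), re_inner_ofReal_smul_ofReal_smul,
    norm_smul, norm_smul, RCLike.norm_ofReal, RCLike.norm_ofReal, mul_pow, mul_pow, sq_abs, sq_abs]
  nlinarith [mul_le_mul_of_nonneg_left (re_inner_le_norm (𝕜 := 𝕜) a b) (sub_nonneg.mpr hst),
    sq_nonneg (‖a‖ - ‖b‖)]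

end

theorem div_norm_mul_norm_of_le {E : Type*} [SeminormedAddCommGroup E] {x : E} {γ : ℝ}
    (hγ0 : 0 ≤ γ) (hγ : γ ≤ ‖x‖) : γ / ‖x‖ * ‖x‖ = γ :=
  div_mul_cancel_of_imp fun h => le_antisymm (h ▸ hγ) hγ0

theorem stmt6_general {V : Type*} [NormedAddCommGroup V] [InnerProductSpace ℂ V]
    (a b : V) (α β : ℝ) (hα0 : 0 ≤ α) (hβ0 : 0 ≤ β) (hα : α ≤ ‖a‖) (hβ : β ≤ ‖b‖) :
    ‖(if a = 0 then (0 : V) else ((α / ‖a‖ : ℝ) : ℂ) • a) -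
        (if b = 0 then (0 : V) else ((β / ‖b‖ : ℝ) : ℂ) • b)‖ ^ 2 ≤
      |α - β| ^ 2 + ‖a - b‖ ^ 2 := by
  have ite_smul_eq (x : V) (c : ℂ) : (if x = 0 then (0 : V) else c • x) = c • x :=
    ite_eq_right_iff.mpr fun hx => by rw [hx, smul_zero]
  have hst : α / ‖a‖ * (β / ‖b‖) ≤ 1 :=
    mul_le_one₀ (div_le_one_of_le₀ hα (norm_nonneg a)) (div_nonneg hβ0 (norm_nonneg b))
      (div_le_one_of_le₀ hβ (norm_nonneg b))
  have key := norm_ofReal_smul_sub_ofReal_smul_sq_le (𝕜 := ℂ) a b hst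
  rw [div_norm_mul_norm_of_le hα0 hα, div_norm_mul_norm_of_le hβ0 hβ] at key
  rwa [ite_smul_eq, ite_smul_eq, sq_abs]

/-- For `a, b` in a complex Hilbert space `V` and `0 ≤ α ≤ ‖a‖`,
`0 ≤ β ≤ ‖b‖`, setting `ã = (α/‖a‖)·a` (and `ã = 0` for `a = 0`) and analogously `b̃`,
one has `‖ã − b̃‖² ≤ |α − β|² + ‖a − b‖²`. -/
theorem stmt6 {V : Type*} [NormedAddCommGroup V] [InnerProductSpace ℂ V] [CompleteSpace V]
    (a b : V) (α β : ℝ) (hα0 : 0 ≤ α) (hβ0 : 0 ≤ β) (hα : α ≤ ‖a‖) (hβ : β ≤ ‖b‖) :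
    ‖(if a = 0 then (0 : V) else ((α / ‖a‖ : ℝ) : ℂ) • a) -
        (if b = 0 then (0 : V) else ((β / ‖b‖ : ℝ) : ℂ) • b)‖ ^ 2 ≤
      |α - β| ^ 2 + ‖a - b‖ ^ 2 :=
  stmt6_general a b α β hα0 hβ0 hα hβ
end

section
/- Let V₁, V₂ be complex Hilbert spaces and Φ : V₂ → V₁ a unitary map. Let a, ã ∈ V₁ and b, b̃ ∈ V₂ satisfy ⟨a,ã⟩ = ‖a‖‖ã‖ and ⟨b,b̃⟩ = ‖b‖‖b̃‖. Then Re⟨a − Φb, ã − Φb̃⟩ ≥ (‖a‖ − ‖b‖)(‖ã‖ − ‖b̃‖). -/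
open scoped ComplexInnerProductSpace

/-- If `Φ : V₂ → V₁` is unitary, `⟨a,a'⟩ = ‖a‖‖a'‖` and
`⟨b,b'⟩ = ‖b‖‖b'‖`, then `Re⟨a − Φb, a' − Φb'⟩ ≥ (‖a‖ − ‖b‖)(‖a'‖ − ‖b'‖)`. -/
theorem stmt10 {V₁ V₂ : Type*} [NormedAddCommGroup V₁] [InnerProductSpace ℂ V₁]
    [CompleteSpace V₁] [NormedAddCommGroup V₂] [InnerProductSpace ℂ V₂] [CompleteSpace V₂]
    (Φ : V₂ ≃ₗᵢ[ℂ] V₁) (a a' : V₁) (b b' : V₂)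
    (ha : ⟪a, a'⟫ = ((‖a‖ * ‖a'‖ : ℝ) : ℂ))
    (hb : ⟪b, b'⟫ = ((‖b‖ * ‖b'‖ : ℝ) : ℂ)) :
    (‖a‖ - ‖b‖) * (‖a'‖ - ‖b'‖) ≤ (⟪a - Φ b, a' - Φ b'⟫).re := by
  have hΦ : ⟪Φ b, Φ b'⟫ = ⟪b, b'⟫ := Φ.inner_map_map b b'
  have hexp : ⟪a - Φ b, a' - Φ b'⟫
      = ⟪a, a'⟫ - ⟪a, Φ b'⟫ - ⟪Φ b, a'⟫ + ⟪b, b'⟫ := by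
    simp only [inner_sub_left, inner_sub_right, hΦ]
    ring
  have h1 : (⟪a, Φ b'⟫).re ≤ ‖a‖ * ‖b'‖ := by
    calc (⟪a, Φ b'⟫).re ≤ ‖(⟪a, Φ b'⟫ : ℂ)‖ := Complex.re_le_norm _
      _ ≤ ‖a‖ * ‖Φ b'‖ := norm_inner_le_norm _ _
      _ = ‖a‖ * ‖b'‖ := by rw [Φ.norm_map]
  have h2 : (⟪Φ b, a'⟫).re ≤ ‖b‖ * ‖a'‖ := by
    calc (⟪Φ b, a'⟫).re ≤ ‖(⟪Φ b, a'⟫ : ℂ)‖ := Complex.re_le_norm _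
      _ ≤ ‖Φ b‖ * ‖a'‖ := norm_inner_le_norm _ _
      _ = ‖b‖ * ‖a'‖ := by rw [Φ.norm_map]
  have : (⟪a - Φ b, a' - Φ b'⟫).re
      = ‖a‖ * ‖a'‖ - (⟪a, Φ b'⟫).re - (⟪Φ b, a'⟫).re + ‖b‖ * ‖b'‖ := by
    rw [hexp, ha, hb]; simp
  rw [this]; nlinarith
end
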